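/- arXiv:1407.3914 — 5 statements merged into one kernel-verified Lean document; each statement's English description precedes it below -/
import Mathlib

section
/- Let X be a simplicial space such that p_0 is a homotopy equivalence (equivalently, X_0 is contractible) and for every m ≥ 1 the Segal map p_m : X_m → (X_1)^m is a homotopy equivalence. Fix a point x₀ ∈ X_0, set ∗ = s_0^1(x₀) ∈ X_1, choose a homotopy inverse q : X_1 × X_1 → X_2 of p_2, and define μ = d_1^2 ∘ q : X_1 × X_1 → X_1. Then X_1 is a homotopy associative H-space with multiplication μ and unit ∗: the maps x ↦ μ(x, ∗) and x ↦ μ(∗, x) are each homotopic to the identity of X_1, and μ ∘ (μ × id_{X_1}) is homotopic to μ ∘ (id_{X_1} × μ) as continuous maps X_1 × X_1 × X_1 → X_1. -/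
open CategoryTheory

/-- The `n`-th space of a simplicial space `X : SimplexCategoryᵒᵖ ⥤ TopCat`. -/
abbrev sp (X : SimplexCategoryᵒᵖ ⥤ TopCat) (n : ℕ) : TopCat :=
  X.obj (Opposite.op (SimplexCategory.mk n))

/-- The face map `d_i^{n+1} : X_{n+1} → X_n` induced by the coface `δ_i^{n+1} : [n] → [n+1]`. -/
def face (X : SimplexCategoryᵒᵖ ⥤ TopCat) {n : ℕ} (i : Fin (n + 2)) :
    C(sp X (n + 1), sp X n) :=
  (X.map (SimplexCategory.δ i).op).hom

/-- The degeneracy map `s_i^{n+1} : X_n → X_{n+1}` induced by the codegeneracy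
`σ_i^{n+1} : [n+1] → [n]`. -/
def degen (X : SimplexCategoryᵒᵖ ⥤ TopCat) {n : ℕ} (i : Fin (n + 1)) :
    C(sp X n, sp X (n + 1)) :=
  (X.map (SimplexCategory.σ i).op).hom

/-- The edge map `X(i_{j+1}) : X_m → X_1` induced by the monotone map
`ε_{j+1} : [1] → [m]` with `0 ↦ j`, `1 ↦ j+1`. -/
def edge (X : SimplexCategoryᵒᵖ ⥤ TopCat) {m : ℕ} (j : Fin m) :
    C(sp X m, sp X 1) :=
  (X.map (SimplexCategory.mkOfSucc j).op).hom

/-- The `m`-th Segal map `p_m : X_m → (X_1)^m`; for `m = 0` this is the unique map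
to the one-point space. -/
def segalPi (X : SimplexCategoryᵒᵖ ⥤ TopCat) (m : ℕ) :
    C(sp X m, Fin m → sp X 1) :=
  ⟨fun x j => edge X j x, continuous_pi fun j => (edge X j).continuous⟩

/-- The second Segal map `p_2 = ⟨X(i_1), X(i_2)⟩ : X_2 → X_1 × X_1`. -/
def segal2 (X : SimplexCategoryᵒᵖ ⥤ TopCat) : C(sp X 2, sp X 1 × sp X 1) :=
  ⟨fun x => (edge X 0 x, edge X 1 x), by fun_prop⟩

/-- The third Segal map `p_3 = ⟨X(i_1), X(i_2), X(i_3)⟩ : X_3 → X_1 × X_1 × X_1`. -/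
def segal3 (X : SimplexCategoryᵒᵖ ⥤ TopCat) : C(sp X 3, sp X 1 × sp X 1 × sp X 1) :=
  ⟨fun x => (edge X 0 x, edge X 1 x, edge X 2 x), by fun_prop⟩

/-- `g` is a homotopy inverse of `f`. -/
def IsHomotopyInverse {A B : Type*} [TopologicalSpace A] [TopologicalSpace B]
    (f : C(A, B)) (g : C(B, A)) : Prop :=
  (f.comp g).Homotopic (ContinuousMap.id B) ∧ (g.comp f).Homotopic (ContinuousMap.id A)

/-- The continuous map `f` is a homotopy equivalence. -/
def IsHomotopyEquiv {A B : Type*} [TopologicalSpace A] [TopologicalSpace B]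
    (f : C(A, B)) : Prop :=
  ∃ g : C(B, A), IsHomotopyInverse f g

/-!
Since `q ∘ p₂ ≃ id`, the multiplication `μ = d₁ ∘ q` satisfies `μ ∘ p₂ ≃ d₁`: the product of the
two edges of a 2-simplex is homotopic to its long edge. The degenerate 2-simplices `s₁ x` and
`s₀ x` have edges `(x, s₀ d₀ x)` and `(s₀ d₁ x, x)` and long edge `x`, while `s₀ d_i ≃ s₀ x₀ = ∗`
because `X₀` is contractible; this gives the two unit laws. For a 3-simplex with edges `a, b, c`,
both `μ(μ(a, b), c)` and `μ(a, μ(b, c))` are homotopic to its long edge `d₁ d₁ = d₁ d₂`, and the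
homotopy descends from `X₃` to `X₁³` because `p₃` has a section up to homotopy.
-/

namespace ContinuousMap

variable {A B C Z : Type*} [TopologicalSpace A] [TopologicalSpace B] [TopologicalSpace C]
  [TopologicalSpace Z]

theorem Homotopic.comp_comp_of_comp_homotopic_id {f : C(A, B)} {g : C(B, A)}
    (h : (g.comp f).Homotopic (.id A)) (w : C(Z, A)) : (g.comp (f.comp w)).Homotopic w := by
  simpa using h.comp (.refl w)

def HasHomotopySection (p : C(A, B)) : Prop :=
  ∃ r : C(B, A), (p.comp r).Homotopic (.id B)

theorem HasHomotopySection.comp {p : C(A, B)} {p' : C(B, C)} (hp' : p'.HasHomotopySection)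
    (hp : p.HasHomotopySection) : (p'.comp p).HasHomotopySection := by
  obtain ⟨r, hr⟩ := hp
  obtain ⟨r', hr'⟩ := hp'
  refine ⟨r.comp r', ?_⟩
  simpa using (Homotopic.refl p').comp (hr.comp_comp_of_comp_homotopic_id r') |>.trans hr'

theorem HasHomotopySection.of_comp_eq_id {p : C(A, B)} {r : C(B, A)} (h : p.comp r = .id B) :
    p.HasHomotopySection :=
  ⟨r, h ▸ .refl _⟩

theorem HasHomotopySection.homotopic_of_comp {p : C(A, B)} (hp : p.HasHomotopySection)
    {a b : C(B, C)} (h : (a.comp p).Homotopic (b.comp p)) : a.Homotopic b := by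
  obtain ⟨r, hr⟩ := hp
  have ha : ((a.comp p).comp r).Homotopic a := by simpa using (Homotopic.refl a).comp hr
  have hb : ((b.comp p).comp r).Homotopic b := by simpa using (Homotopic.refl b).comp hr
  exact ha.symm.trans ((h.comp (.refl r)).trans hb)

end ContinuousMap

open ContinuousMap

namespace IsHomotopyEquiv

variable {A B Z : Type*} [TopologicalSpace A] [TopologicalSpace B] [TopologicalSpace Z]

theorem hasHomotopySection {f : C(A, B)} (hf : IsHomotopyEquiv f) :
    f.HasHomotopySection :=
  let ⟨g, hfg, _⟩ := hf
  ⟨g, hfg⟩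

theorem homotopic_of_subsingleton [Subsingleton B] {f : C(A, B)}
    (hf : IsHomotopyEquiv f) (u v : C(Z, A)) : u.Homotopic v := by
  obtain ⟨g, -, hgf⟩ := hf
  have hfuv : f.comp u = f.comp v := ext fun _ => Subsingleton.elim _ _
  have hu := hgf.comp_comp_of_comp_homotopic_id u
  rw [hfuv] at hu
  exact hu.symm.trans (hgf.comp_comp_of_comp_homotopic_id v)

end IsHomotopyEquiv

namespace Segal

variable (X : SimplexCategoryᵒᵖ ⥤ TopCat) {Z : Type*} [TopologicalSpace Z]

theorem map_hom_comp_map_hom {a b c : SimplexCategory} (f : a ⟶ b) (g : b ⟶ c) :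
    (X.map f.op).hom.comp (X.map g.op).hom = (X.map (f ≫ g).op).hom := by
  rw [op_comp, X.map_comp, TopCat.hom_comp]

theorem map_hom_comp_map_hom_eq_id {a b : SimplexCategory} {f : a ⟶ b} {g : b ⟶ a}
    (w : f ≫ g = 𝟙 a) : (X.map f.op).hom.comp (X.map g.op).hom = .id _ := by
  rw [map_hom_comp_map_hom, w, op_id, X.map_id, TopCat.hom_id]

theorem map_hom_comp_map_hom_eq_map {a b c : SimplexCategory} {f : a ⟶ b} {g : b ⟶ c}
    {h : a ⟶ c} (w : f ≫ g = h) : (X.map f.op).hom.comp (X.map g.op).hom = (X.map h.op).hom := by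
  rw [map_hom_comp_map_hom, w]

theorem map_hom_comp_map_hom_eq {a b b' c : SimplexCategory} {f : a ⟶ b} {g : b ⟶ c}
    {f' : a ⟶ b'} {g' : b' ⟶ c} (w : f ≫ g = f' ≫ g') :
    (X.map f.op).hom.comp (X.map g.op).hom = (X.map f'.op).hom.comp (X.map g'.op).hom := by
  rw [map_hom_comp_map_hom, map_hom_comp_map_hom, w]

theorem segal2_comp (w : C(Z, sp X 2)) :
    (segal2 X).comp w = ((edge X 0).comp w).prodMk ((edge X 1).comp w) :=
  rfl

theorem segal2_comp_degen_zero :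
    (segal2 X).comp (degen X 0) = ((degen X 0).comp (face X 1)).prodMk (.id _) := by
  have h₀ : (edge X 0).comp (degen X 0) = (degen X 0).comp (face X 1) :=
    map_hom_comp_map_hom_eq X (by decide)
  have h₁ : (edge X 1).comp (degen X 0) = .id _ := map_hom_comp_map_hom_eq_id X (by decide)
  rw [segal2_comp, h₀, h₁]

theorem segal2_comp_degen_one :
    (segal2 X).comp (degen X 1) = (ContinuousMap.id _).prodMk ((degen X 0).comp (face X 0)) := by
  have h₀ : (edge X 0).comp (degen X 1) = .id _ := map_hom_comp_map_hom_eq_id X (by decide)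
  have h₁ : (edge X 1).comp (degen X 1) = (degen X 0).comp (face X 0) :=
    map_hom_comp_map_hom_eq X (by decide)
  rw [segal2_comp, h₀, h₁]

theorem face_one_comp_degen (i : Fin 2) : (face X 1).comp (degen X i) = .id _ := by
  fin_cases i <;> exact map_hom_comp_map_hom_eq_id X (by decide)

theorem segal2_comp_face_zero : (segal2 X).comp (face X 0) = (edge X 1).prodMk (edge X 2) := by
  have h₀ : (edge X 0).comp (face X 0 : C(sp X 3, sp X 2)) = edge X 1 :=
    map_hom_comp_map_hom_eq_map X (by decide)
  have h₁ : (edge X 1).comp (face X 0 : C(sp X 3, sp X 2)) = edge X 2 :=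
    map_hom_comp_map_hom_eq_map X (by decide)
  rw [segal2_comp, h₀, h₁]

theorem segal2_comp_face_one :
    (segal2 X).comp (face X 1) = ((face X 1).comp (face X 3)).prodMk (edge X 2) := by
  have h₀ : (edge X 0).comp (face X 1 : C(sp X 3, sp X 2)) = (face X 1).comp (face X 3) :=
    map_hom_comp_map_hom_eq X (by decide)
  have h₁ : (edge X 1).comp (face X 1 : C(sp X 3, sp X 2)) = edge X 2 :=
    map_hom_comp_map_hom_eq_map X (by decide)
  rw [segal2_comp, h₀, h₁]

theorem segal2_comp_face_two :
    (segal2 X).comp (face X 2) = (edge X 0).prodMk ((face X 1).comp (face X 0)) := by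
  have h₀ : (edge X 0).comp (face X 2 : C(sp X 3, sp X 2)) = edge X 0 :=
    map_hom_comp_map_hom_eq_map X (by decide)
  have h₁ : (edge X 1).comp (face X 2 : C(sp X 3, sp X 2)) = (face X 1).comp (face X 0) :=
    map_hom_comp_map_hom_eq X (by decide)
  rw [segal2_comp, h₀, h₁]

theorem segal2_comp_face_three : (segal2 X).comp (face X 3) = (edge X 0).prodMk (edge X 1) := by
  have h₀ : (edge X 0).comp (face X 3 : C(sp X 3, sp X 2)) = edge X 0 :=
    map_hom_comp_map_hom_eq_map X (by decide)
  have h₁ : (edge X 1).comp (face X 3 : C(sp X 3, sp X 2)) = edge X 1 :=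
    map_hom_comp_map_hom_eq_map X (by decide)
  rw [segal2_comp, h₀, h₁]

theorem face_one_comp_face_one :
    (face X 1).comp (face X 1 : C(sp X 3, sp X 2)) = (face X 1).comp (face X 2) :=
  map_hom_comp_map_hom_eq X (by decide)

theorem segal3_hasHomotopySection (h3 : IsHomotopyEquiv (segalPi X 3)) :
    (segal3 X).HasHomotopySection := by
  let ψ : C(Fin 3 → sp X 1, sp X 1 × sp X 1 × sp X 1) := ⟨fun f => (f 0, f 1, f 2), by fun_prop⟩
  let φ : C(sp X 1 × sp X 1 × sp X 1, Fin 3 → sp X 1) :=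
    ⟨fun p => ![p.1, p.2.1, p.2.2], by fun_prop⟩
  have hψ : segal3 X = ψ.comp (segalPi X 3) := rfl
  rw [hψ]
  exact (HasHomotopySection.of_comp_eq_id (r := φ) rfl).comp h3.hasHomotopySection

variable {X} {μ : C(sp X 1 × sp X 1, sp X 1)}

theorem mul_prodMk_homotopic_face_one (hμ : (μ.comp (segal2 X)).Homotopic (face X 1))
    {w : C(Z, sp X 2)} {u v : C(Z, sp X 1)} (h : (segal2 X).comp w = u.prodMk v) :
    (μ.comp (u.prodMk v)).Homotopic ((face X 1).comp w) := by
  rw [← h]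
  exact hμ.comp (.refl w)

theorem degen_comp_face_homotopic_const (h0 : IsHomotopyEquiv (segalPi X 0)) (x₀ : sp X 0)
    (i : Fin 2) : ((degen X 0).comp (face X i)).Homotopic (.const _ (degen X 0 x₀)) :=
  (Homotopic.refl _).comp (h0.homotopic_of_subsingleton _ (.const _ x₀))

theorem mul_right_unit_homotopic_id (hμ : (μ.comp (segal2 X)).Homotopic (face X 1))
    (h0 : IsHomotopyEquiv (segalPi X 0)) (x₀ : sp X 0) :
    (μ.comp ⟨fun x => (x, degen X 0 x₀), by fun_prop⟩).Homotopic (.id _) := by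
  have h := mul_prodMk_homotopic_face_one hμ (segal2_comp_degen_one X)
  rw [face_one_comp_degen] at h
  exact ((Homotopic.refl μ).comp
    ((Homotopic.refl _).prodMk (degen_comp_face_homotopic_const h0 x₀ 0).symm)).trans h

theorem mul_left_unit_homotopic_id (hμ : (μ.comp (segal2 X)).Homotopic (face X 1))
    (h0 : IsHomotopyEquiv (segalPi X 0)) (x₀ : sp X 0) :
    (μ.comp ⟨fun x => (degen X 0 x₀, x), by fun_prop⟩).Homotopic (.id _) := by
  have h := mul_prodMk_homotopic_face_one hμ (segal2_comp_degen_zero X)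
  rw [face_one_comp_degen] at h
  exact ((Homotopic.refl μ).comp
    ((degen_comp_face_homotopic_const h0 x₀ 1).symm.prodMk (.refl _))).trans h

theorem mul_mul_left_comp_segal3_homotopic (hμ : (μ.comp (segal2 X)).Homotopic (face X 1)) :
    (((μ.comp (μ.prodMap (.id _))).comp
        ((Homeomorph.prodAssoc (sp X 1) (sp X 1) (sp X 1)).symm :
          C(sp X 1 × sp X 1 × sp X 1, (sp X 1 × sp X 1) × sp X 1))).comp
      (segal3 X)).Homotopic ((face X 1).comp (face X 1)) :=
  ((Homotopic.refl μ).comp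
    ((mul_prodMk_homotopic_face_one hμ (segal2_comp_face_three X)).prodMk (.refl _))).trans
    (mul_prodMk_homotopic_face_one hμ (segal2_comp_face_one X))

theorem mul_mul_right_comp_segal3_homotopic (hμ : (μ.comp (segal2 X)).Homotopic (face X 1)) :
    ((μ.comp ((ContinuousMap.id _).prodMap μ)).comp (segal3 X)).Homotopic
      ((face X 1).comp (face X 2)) :=
  ((Homotopic.refl μ).comp
    ((Homotopic.refl _).prodMk (mul_prodMk_homotopic_face_one hμ (segal2_comp_face_zero X)))).trans
    (mul_prodMk_homotopic_face_one hμ (segal2_comp_face_two X))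

theorem mul_assoc_homotopic (hμ : (μ.comp (segal2 X)).Homotopic (face X 1))
    (h3 : (segal3 X).HasHomotopySection) :
    ((μ.comp (μ.prodMap (.id _))).comp
        ((Homeomorph.prodAssoc (sp X 1) (sp X 1) (sp X 1)).symm :
          C(sp X 1 × sp X 1 × sp X 1, (sp X 1 × sp X 1) × sp X 1))).Homotopic
      (μ.comp ((ContinuousMap.id _).prodMap μ)) := by
  refine h3.homotopic_of_comp ((mul_mul_left_comp_segal3_homotopic hμ).trans ?_)
  rw [face_one_comp_face_one]
  exact (mul_mul_right_comp_segal3_homotopic hμ).symm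

end Segal

/-- Segal's Lemma 3.1: if all Segal maps are homotopy equivalences then `X_1` is a
homotopy associative H-space with multiplication `μ = d_1^2 ∘ q` and unit `∗ = s_0^1 x₀`. -/
theorem segal_lemma_3_1 (X : SimplexCategoryᵒᵖ ⥤ TopCat)
    (h0 : IsHomotopyEquiv (segalPi X 0))
    (hm : ∀ m : ℕ, 1 ≤ m → IsHomotopyEquiv (segalPi X m))
    (x₀ : sp X 0) (q : C(sp X 1 × sp X 1, sp X 2))
    (hq : IsHomotopyInverse (segal2 X) q)
    (star : sp X 1) (hstar : star = degen X 0 x₀)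
    (μ : C(sp X 1 × sp X 1, sp X 1)) (hμ : μ = (face X 1).comp q) :
    -- `x ↦ μ(x, ∗)` is homotopic to the identity
    (μ.comp ⟨fun x => (x, star), by fun_prop⟩).Homotopic (ContinuousMap.id (sp X 1)) ∧
    -- `x ↦ μ(∗, x)` is homotopic to the identity
    (μ.comp ⟨fun x => (star, x), by fun_prop⟩).Homotopic (ContinuousMap.id (sp X 1)) ∧
    -- `μ ∘ (μ × id)` is homotopic to `μ ∘ (id × μ)` as maps `X_1 × X_1 × X_1 → X_1`
    ((μ.comp (μ.prodMap (ContinuousMap.id (sp X 1)))).comp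
        ((Homeomorph.prodAssoc (sp X 1) (sp X 1) (sp X 1)).symm :
          C(sp X 1 × sp X 1 × sp X 1, (sp X 1 × sp X 1) × sp X 1))).Homotopic
      (μ.comp ((ContinuousMap.id (sp X 1)).prodMap μ)) := by
  subst hstar
  have hμp : (μ.comp (segal2 X)).Homotopic (face X 1) :=
    hμ ▸ (Homotopic.refl (face X 1)).comp hq.2
  have h3 := Segal.segal3_hasHomotopySection X (hm 3 (by norm_num))
  exact ⟨Segal.mul_right_unit_homotopic_id hμp h0 x₀, Segal.mul_left_unit_homotopic_id hμp h0 x₀,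
    Segal.mul_assoc_homotopic hμp h3⟩
end

section
/- Let X be a simplicial space whose space X_0 is contractible, and fix a point x₀ ∈ X_0 with ∗ = s_0^1(x₀) ∈ X_1. Then the map j₁ : X_1 → X_1 × X_1 given by j₁(x) = (x, ∗) is homotopic to p_2 ∘ s_1^2, and the map j₂ : X_1 → X_1 × X_1 given by j₂(x) = (∗, x) is homotopic to p_2 ∘ s_0^2. -/
open CategoryTheory

/-!
On `X_2` the Segal map is `p_2 = ⟨d_2, d_0⟩`, so the simplicial identities give
`p_2 ∘ s_1 = ⟨id, s_0 ∘ d_0⟩` and `p_2 ∘ s_0 = ⟨s_0 ∘ d_1, id⟩`. Since `X_0` is contractible, each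
face map `d_i : X_1 → X_0` is homotopic to the constant map at `x₀`, hence `s_0 ∘ d_i` is
homotopic to the constant map at `∗ = s_0 x₀`.
-/

theorem ContinuousMap.Homotopic.of_contractibleSpace {A Z : Type*} [TopologicalSpace A]
    [TopologicalSpace Z] [ContractibleSpace Z] (f g : C(A, Z)) : f.Homotopic g := by
  obtain ⟨z, hz⟩ := id_nullhomotopic Z
  have hconst (h : C(A, Z)) : h.Homotopic (ContinuousMap.const A z) := by
    simpa using hz.comp (.refl h)
  exact (hconst f).trans (hconst g).symm

section SimplicialIdentities

variable (X : SimplexCategoryᵒᵖ ⥤ TopCat) {n : ℕ}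

theorem face_comp_degen_castSucc (i : Fin (n + 1)) :
    (face X i.castSucc).comp (degen X i) = ContinuousMap.id _ :=
  congrArg TopCat.Hom.hom (SimplicialObject.δ_comp_σ_self (X := X))

theorem face_comp_degen_succ (i : Fin (n + 1)) :
    (face X i.succ).comp (degen X i) = ContinuousMap.id _ :=
  congrArg TopCat.Hom.hom (SimplicialObject.δ_comp_σ_succ (X := X))

theorem face_comp_degen_of_le {i : Fin (n + 2)} {j : Fin (n + 1)} (H : i ≤ j.castSucc) :
    (face X i.castSucc).comp (degen X j.succ) = (degen X j).comp (face X i) :=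
  congrArg TopCat.Hom.hom (SimplicialObject.δ_comp_σ_of_le (X := X) H)

theorem face_comp_degen_of_gt {i : Fin (n + 2)} {j : Fin (n + 1)} (H : j.castSucc < i) :
    (face X i.succ).comp (degen X j.castSucc) = (degen X j).comp (face X i) :=
  congrArg TopCat.Hom.hom (SimplicialObject.δ_comp_σ_of_gt (X := X) H)

end SimplicialIdentities

section SegalMap

variable (X : SimplexCategoryᵒᵖ ⥤ TopCat)

theorem segal2_eq_prodMk_face : segal2 X = (face X 2).prodMk (face X 0) := by
  ext x
  · simp [segal2, edge, face, SimplexCategory.mkOfSucc_zero_eq_δ]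
  · simp [segal2, edge, face, SimplexCategory.mkOfSucc_one_eq_δ]

theorem segal2_comp_degen_one :
    (segal2 X).comp (degen X 1) = (ContinuousMap.id _).prodMk ((degen X 0).comp (face X 0)) := by
  rw [segal2_eq_prodMk_face]
  ext y
  · exact ContinuousMap.congr_fun (face_comp_degen_succ X 1) y
  · exact ContinuousMap.congr_fun (face_comp_degen_of_le X (i := 0) (j := 0) le_rfl) y

theorem segal2_comp_degen_zero :
    (segal2 X).comp (degen X 0) = ((degen X 0).comp (face X 1)).prodMk (ContinuousMap.id _) := by
  rw [segal2_eq_prodMk_face]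
  ext y
  · exact ContinuousMap.congr_fun
      (face_comp_degen_of_gt X (n := 0) (i := 1) (j := 0) Fin.zero_lt_one) y
  · exact ContinuousMap.congr_fun (face_comp_degen_castSucc X 0) y

end SegalMap

/-- If `X_0` is contractible and `∗ = s_0^1 x₀`, then `j₁ = (x ↦ (x, ∗))` is homotopic to
`p_2 ∘ s_1^2` and `j₂ = (x ↦ (∗, x))` is homotopic to `p_2 ∘ s_0^2`. -/
theorem unit_maps_factor (X : SimplexCategoryᵒᵖ ⥤ TopCat)
    (hX0 : ContractibleSpace (sp X 0))
    (x₀ : sp X 0) (star : sp X 1) (hstar : star = degen X 0 x₀) :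
    (⟨fun x => (x, star), by fun_prop⟩ : C(sp X 1, sp X 1 × sp X 1)).Homotopic
      ((segal2 X).comp (degen X (1 : Fin 2))) ∧
    (⟨fun x => (star, x), by fun_prop⟩ : C(sp X 1, sp X 1 × sp X 1)).Homotopic
      ((segal2 X).comp (degen X (0 : Fin 2))) := by
  have hstar_homotopic (i : Fin 2) :
      (ContinuousMap.const (sp X 1) star).Homotopic ((degen X 0).comp (face X i)) := by
    rw [hstar, ← ContinuousMap.comp_const]
    exact .comp (.refl _) (.of_contractibleSpace _ _)
  rw [segal2_comp_degen_one, segal2_comp_degen_zero]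
  exact ⟨(ContinuousMap.Homotopic.refl (ContinuousMap.id _)).prodMk (hstar_homotopic 0),
    (hstar_homotopic 1).prodMk (.refl (ContinuousMap.id _))⟩
end

section
/- Let X be a simplicial space such that the Segal maps p_2 : X_2 → X_1 × X_1 and p_3 : X_3 → X_1 × X_1 × X_1 are homotopy equivalences. Then ⟨d_3^3, X(i_3)⟩ : X_3 → X_2 × X_1 and ⟨X(i_1), d_0^3⟩ : X_3 → X_1 × X_2 are homotopy equivalences; moreover, for any homotopy inverse r of p_3, the map r ∘ (p_2 × id_{X_1}) is a homotopy inverse of ⟨d_3^3, X(i_3)⟩ and the map r ∘ (id_{X_1} × p_2) is a homotopy inverse of ⟨X(i_1), d_0^3⟩. -/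
open CategoryTheory

/-!
Composing `⟨d_3, X(i_3)⟩` with the homotopy equivalence `p_2 × id` (followed by reassociation),
and `⟨X(i_1), d_0⟩` with `id × p_2`, gives `p_3` on the nose, by the simplicial identities
`ε_j ≫ δ_i = ε_k`. Two out of three for homotopy equivalences then does the rest: if `F` is a
homotopy equivalence with inverse `G` and `F ∘ q` has homotopy inverse `r`, then `q` is homotopic
to `G ∘ F ∘ q`, which has homotopy inverse `r ∘ F`.
-/

open ContinuousMap

section HomotopyInverse

variable {A B C : Type*} [TopologicalSpace A] [TopologicalSpace B] [TopologicalSpace C]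

theorem ContinuousMap.HomotopyEquiv.isHomotopyInverse (e : A ≃ₕ B) :
    IsHomotopyInverse e.toFun e.invFun :=
  ⟨e.right_inv, e.left_inv⟩

namespace IsHomotopyInverse

def toHomotopyEquiv {f : C(A, B)} {g : C(B, A)} (h : IsHomotopyInverse f g) : A ≃ₕ B :=
  ⟨f, g, h.2, h.1⟩

theorem of_homotopic {f f' : C(A, B)} {g : C(B, A)} (h : IsHomotopyInverse f g)
    (hf : f.Homotopic f') : IsHomotopyInverse f' g :=
  ⟨(hf.symm.comp (.refl g)).trans h.1, ((Homotopic.refl g).comp hf.symm).trans h.2⟩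

theorem of_comp_left {q : C(A, B)} {F : C(B, C)} {p : C(A, C)} {r : C(C, A)}
    (hF : IsHomotopyEquiv F) (hFq : F.comp q = p) (hr : IsHomotopyInverse p r) :
    IsHomotopyInverse q (r.comp F) := by
  subst hFq
  obtain ⟨G, hFG⟩ := hF
  have hq : (G.comp (F.comp q)).Homotopic q := by
    simpa only [← comp_assoc, id_comp] using hFG.2.comp (.refl q)
  exact (hr.toHomotopyEquiv.trans hFG.toHomotopyEquiv.symm).isHomotopyInverse.of_homotopic hq

end IsHomotopyInverse

end HomotopyInverse

section Segal

open SimplexCategory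

variable (X : SimplexCategoryᵒᵖ ⥤ TopCat)

theorem edge_face_apply {n : ℕ} {i : Fin (n + 2)} {j : Fin n} {k : Fin (n + 1)}
    (h : mkOfSucc j ≫ δ i = mkOfSucc k) (x : sp X (n + 1)) :
    edge X j (face X i x) = edge X k x := by
  rw [edge, edge, face, ← h, op_comp, X.map_comp]
  rfl

theorem segal3_eq_comp_face_prodMk_edge :
    ((Homeomorph.prodAssoc (sp X 1) (sp X 1) (sp X 1) : C(_, _)).comp
      ((segal2 X).prodMap (ContinuousMap.id (sp X 1)))).comp
      ((face X (3 : Fin 4)).prodMk (edge X 2)) = segal3 X := by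
  ext x
  · exact edge_face_apply X (j := 0) (k := 0) (by ext x : 3; fin_cases x <;> rfl) x
  · exact edge_face_apply X (j := 1) (k := 1) (by ext x : 3; fin_cases x <;> rfl) x
  · rfl

theorem segal3_eq_comp_edge_prodMk_face :
    ((ContinuousMap.id (sp X 1)).prodMap (segal2 X)).comp
      ((edge X 0).prodMk (face X (0 : Fin 4))) = segal3 X := by
  ext x
  · rfl
  · exact edge_face_apply X (j := 0) (k := 1) (by ext x : 3; fin_cases x <;> rfl) x
  · exact edge_face_apply X (j := 1) (k := 2) (by ext x : 3; fin_cases x <;> rfl) x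

end Segal

/-- If `p_2` and `p_3` are homotopy equivalences, then `⟨d_3^3, X(i_3)⟩ : X_3 → X_2 × X_1` and
`⟨X(i_1), d_0^3⟩ : X_3 → X_1 × X_2` are homotopy equivalences; moreover, for any homotopy
inverse `r` of `p_3`, `r ∘ (p_2 × id)` is a homotopy inverse of the former and
`r ∘ (id × p_2)` of the latter (the canonical associativity homeomorphism is inserted
where needed). -/
theorem pair_maps_homotopy_equiv (X : SimplexCategoryᵒᵖ ⥤ TopCat)
    (h2 : IsHomotopyEquiv (segal2 X)) (h3 : IsHomotopyEquiv (segal3 X)) :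
    IsHomotopyEquiv
      (⟨fun x => (face X (3 : Fin 4) x, edge X 2 x), by fun_prop⟩ :
        C(sp X 3, sp X 2 × sp X 1)) ∧
    IsHomotopyEquiv
      (⟨fun x => (edge X 0 x, face X (0 : Fin 4) x), by fun_prop⟩ :
        C(sp X 3, sp X 1 × sp X 2)) ∧
    ∀ r : C(sp X 1 × sp X 1 × sp X 1, sp X 3), IsHomotopyInverse (segal3 X) r →
      IsHomotopyInverse
        (⟨fun x => (face X (3 : Fin 4) x, edge X 2 x), by fun_prop⟩ :
          C(sp X 3, sp X 2 × sp X 1))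
        ((r.comp ((Homeomorph.prodAssoc (sp X 1) (sp X 1) (sp X 1) : C(_, _)))).comp
          ((segal2 X).prodMap (ContinuousMap.id (sp X 1)))) ∧
      IsHomotopyInverse
        (⟨fun x => (edge X 0 x, face X (0 : Fin 4) x), by fun_prop⟩ :
          C(sp X 3, sp X 1 × sp X 2))
        (r.comp ((ContinuousMap.id (sp X 1)).prodMap (segal2 X))) := by
  obtain ⟨g₂, hg₂⟩ := h2
  have hA₁ : IsHomotopyEquiv
      ((Homeomorph.prodAssoc (sp X 1) (sp X 1) (sp X 1) : C(_, sp X 1 × sp X 1 × sp X 1)).comp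
        ((segal2 X).prodMap (ContinuousMap.id (sp X 1)))) :=
    ⟨_, ((hg₂.toHomotopyEquiv.prodCongr (.refl (sp X 1))).trans
      (Homeomorph.prodAssoc _ _ _).toHomotopyEquiv).isHomotopyInverse⟩
  have hA₂ : IsHomotopyEquiv ((ContinuousMap.id (sp X 1)).prodMap (segal2 X)) :=
    ⟨_, ((ContinuousMap.HomotopyEquiv.refl (sp X 1)).prodCongr
      hg₂.toHomotopyEquiv).isHomotopyInverse⟩
  have inverses := fun (r : C(sp X 1 × sp X 1 × sp X 1, sp X 3))
      (hr : IsHomotopyInverse (segal3 X) r) =>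
    And.intro (hr.of_comp_left hA₁ (segal3_eq_comp_face_prodMk_edge X))
      (hr.of_comp_left hA₂ (segal3_eq_comp_edge_prodMk_face X))
  obtain ⟨r, hr⟩ := h3
  exact ⟨⟨_, (inverses r hr).1⟩, ⟨_, (inverses r hr).2⟩, inverses⟩
end

section
/- Let X be a simplicial space such that the Segal maps p_2 and p_3 are homotopy equivalences, and let r be any homotopy inverse of p_3. Then d_1^2 × id_{X_1} is homotopic to p_2 ∘ d_1^3 ∘ r ∘ (p_2 × id_{X_1}) as continuous maps X_2 × X_1 → X_1 × X_1. -/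
open CategoryTheory

/-!
Write `q = p₂ × id : X₂ × X₁ → X₁³` and `u = ⟨d₃, X(i₃)⟩ : X₃ → X₂ × X₁`. The simplicial identities
give `q ∘ u = p₃` and `(d₁ × id) ∘ u = p₂ ∘ d₁`, so the right-hand side is `(d₁ × id) ∘ k` with
`k = u ∘ r ∘ q`. Now `q ∘ k = p₃ ∘ r ∘ q ≃ q`, and `q` has the left homotopy inverse
`p₂⁻¹ × id`, hence `k ≃ id`.
-/

namespace ContinuousMap.Homotopic

variable {A B : Type*} [TopologicalSpace A] [TopologicalSpace B]

theorem homotopic_comp_of_homotopic_id {f : C(B, B)} (hf : f.Homotopic (.id B)) (g : C(A, B)) :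
    (f.comp g).Homotopic g := by
  simpa using hf.comp (refl g)

theorem homotopic_id_of_comp_homotopic_self {q : C(A, B)} {s : C(B, A)}
    (hsq : (s.comp q).Homotopic (.id A)) {k : C(A, A)} (hk : (q.comp k).Homotopic q) :
    k.Homotopic (.id A) := by
  have hsqk : ((s.comp q).comp k).Homotopic (s.comp q) := by
    rw [comp_assoc]
    exact (refl s).comp hk
  exact ((hsq.homotopic_comp_of_homotopic_id k).symm.trans hsqk).trans hsq

end ContinuousMap.Homotopic

theorem CategoryTheory.Functor.map_op_apply_map_op_apply {C : Type*} [Category C]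
    (X : Cᵒᵖ ⥤ TopCat) {a b c : C} (f : a ⟶ b) (g : b ⟶ c) (x : X.obj (Opposite.op c)) :
    X.map f.op (X.map g.op x) = X.map (f ≫ g).op x := by
  rw [op_comp, X.map_comp, TopCat.comp_app]

open ContinuousMap SimplexCategory

section SimplicialSpace

variable (X : SimplexCategoryᵒᵖ ⥤ TopCat)

theorem prodAssoc_comp_segal2_prodMap_comp_prodMk :
    ((Homeomorph.prodAssoc (sp X 1) (sp X 1) (sp X 1) : C(_, _)).comp
      ((segal2 X).prodMap (.id (sp X 1)))).comp ((face X (3 : Fin 4)).prodMk (edge X 2)) =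
      segal3 X := by
  ext x
  · change X.map _ (X.map _ x) = _
    rw [X.map_op_apply_map_op_apply, mkOfSucc_δ_lt (by decide)]
    rfl
  · change X.map _ (X.map _ x) = _
    rw [X.map_op_apply_map_op_apply, mkOfSucc_δ_lt (by decide)]
    rfl
  · rfl

theorem face_one_prodMap_comp_prodMk :
    ((face X (1 : Fin 3)).prodMap (.id (sp X 1))).comp ((face X (3 : Fin 4)).prodMk (edge X 2)) =
      (segal2 X).comp (face X (1 : Fin 4)) := by
  have hδ : (δ 1 ≫ δ 3 : SimplexCategory.mk 1 ⟶ SimplexCategory.mk 3) = δ 2 ≫ δ 1 :=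
    δ_comp_δ (n := 1) (i := 1) (j := 2) (by decide)
  ext x
  · change X.map _ (X.map _ x) = X.map _ (X.map _ x)
    rw [X.map_op_apply_map_op_apply, X.map_op_apply_map_op_apply, mkOfSucc_zero_eq_δ, hδ]
  · change _ = X.map _ (X.map _ x)
    rw [X.map_op_apply_map_op_apply, mkOfSucc_δ_gt (by decide)]
    rfl

end SimplicialSpace

theorem face_one_times_id_homotopic_general (X : SimplexCategoryᵒᵖ ⥤ TopCat)
    (h2 : IsHomotopyEquiv (segal2 X))
    (r : C(sp X 1 × sp X 1 × sp X 1, sp X 3)) (hr : IsHomotopyInverse (segal3 X) r) :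
    ((face X (1 : Fin 3)).prodMap (ContinuousMap.id (sp X 1))).Homotopic
      ((segal2 X).comp ((face X (1 : Fin 4)).comp
        (r.comp (((Homeomorph.prodAssoc (sp X 1) (sp X 1) (sp X 1) : C(_, _))).comp
          ((segal2 X).prodMap (ContinuousMap.id (sp X 1))))))) := by
  obtain ⟨g, -, hg⟩ := h2
  set q : C(sp X 2 × sp X 1, sp X 1 × sp X 1 × sp X 1) :=
    (Homeomorph.prodAssoc (sp X 1) (sp X 1) (sp X 1) : C(_, _)).comp
      ((segal2 X).prodMap (.id (sp X 1)))
  have hq : (((g.prodMap (.id (sp X 1))).comp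
      ((Homeomorph.prodAssoc (sp X 1) (sp X 1) (sp X 1)).symm : C(_, _))).comp q).Homotopic
      (.id (sp X 2 × sp X 1)) :=
    -- the composite is definitionally `(g ∘ p₂) × id`
    hg.prodMap (.refl (.id (sp X 1)))
  have hk : (((face X 3).prodMk (edge X 2)).comp (r.comp q)).Homotopic (.id _) := by
    refine Homotopic.homotopic_id_of_comp_homotopic_self hq ?_
    rw [← comp_assoc, prodAssoc_comp_segal2_prodMap_comp_prodMk, ← comp_assoc]
    exact hr.1.homotopic_comp_of_homotopic_id q
  simpa only [comp_id, ← comp_assoc, face_one_prodMap_comp_prodMk] using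
    ((Homotopic.refl ((face X (1 : Fin 3)).prodMap (.id (sp X 1)))).comp hk).symm

/-- If `p_2` and `p_3` are homotopy equivalences and `r` is any homotopy inverse of `p_3`,
then `d_1^2 × id` is homotopic to `p_2 ∘ d_1^3 ∘ r ∘ (p_2 × id)` as maps
`X_2 × X_1 → X_1 × X_1` (the canonical associativity homeomorphism is inserted). -/
theorem face_one_times_id_homotopic (X : SimplexCategoryᵒᵖ ⥤ TopCat)
    (h2 : IsHomotopyEquiv (segal2 X)) (h3 : IsHomotopyEquiv (segal3 X))
    (r : C(sp X 1 × sp X 1 × sp X 1, sp X 3)) (hr : IsHomotopyInverse (segal3 X) r) :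
    ((face X (1 : Fin 3)).prodMap (ContinuousMap.id (sp X 1))).Homotopic
      ((segal2 X).comp ((face X (1 : Fin 4)).comp
        (r.comp (((Homeomorph.prodAssoc (sp X 1) (sp X 1) (sp X 1) : C(_, _))).comp
          ((segal2 X).prodMap (ContinuousMap.id (sp X 1))))))) :=
  face_one_times_id_homotopic_general X h2 r hr
end

section
/- Let X be a simplicial space such that the Segal maps p_2 and p_3 are homotopy equivalences, and let r be any homotopy inverse of p_3. Then id_{X_1} × d_1^2 is homotopic to p_2 ∘ d_2^3 ∘ r ∘ (id_{X_1} × p_2) as continuous maps X_1 × X_2 → X_1 × X_1. -/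
open CategoryTheory

/-!
Put `w = r ∘ (id × p₂) : X₁ × X₂ → X₃`. Since `p₃ = ⟨X(i₁), p₂ ∘ d₀⟩` and `p₃ ∘ r ≃ id`, we get
`X(i₁) ∘ w ≃ pr₁` and `p₂ ∘ d₀ ∘ w ≃ p₂ ∘ pr₂`, hence `d₀ ∘ w ≃ pr₂` because `p₂` has a left
homotopy inverse. On the other hand the face `d₂` of a 3-simplex is its face `013`, whose edges
are `01` and `13 = d₁ d₀`, so `p₂ ∘ d₂ = ⟨X(i₁), d₁ ∘ d₀⟩` and
`p₂ ∘ d₂ ∘ w ≃ ⟨pr₁, d₁ ∘ pr₂⟩ = id × d₁`.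
-/

namespace ContinuousMap.Homotopic

variable {A B C : Type*} [TopologicalSpace A] [TopologicalSpace B] [TopologicalSpace C]

theorem of_comp_left {p : C(B, C)} {q : C(C, B)} (hqp : (q.comp p).Homotopic (.id B))
    {f g : C(A, B)} (h : (p.comp f).Homotopic (p.comp g)) : f.Homotopic g := by
  have hqp_comp (k : C(A, B)) : (q.comp (p.comp k)).Homotopic k := by
    simpa only [← comp_assoc, id_comp] using hqp.comp (refl k)
  exact (hqp_comp f).symm.trans (((refl q).comp h).trans (hqp_comp g))

theorem prodMk_iff {f₀ f₁ : C(A, B)} {g₀ g₁ : C(A, C)} :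
    (f₀.prodMk g₀).Homotopic (f₁.prodMk g₁) ↔ f₀.Homotopic f₁ ∧ g₀.Homotopic g₁ :=
  ⟨fun h => ⟨(refl fst).comp h, (refl snd).comp h⟩, fun h => h.1.prodMk h.2⟩

end ContinuousMap.Homotopic

theorem map_op_hom_comp_map_op_hom {C : Type*} [Category C] (F : Cᵒᵖ ⥤ TopCat) {a b c : C}
    (f : b ⟶ c) (g : a ⟶ b) : (F.map g.op).hom.comp (F.map f.op).hom = (F.map (g ≫ f).op).hom := by
  rw [← TopCat.hom_comp, ← F.map_comp, ← op_comp]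

section SimplicialSpace

open SimplexCategory

variable (X : SimplexCategoryᵒᵖ ⥤ TopCat)

theorem edge_comp_face_zero {n : ℕ} (j : Fin (n + 1)) :
    (edge X j).comp (face X 0) = edge X j.succ := by
  have h : mkOfSucc j ≫ δ 0 = mkOfSucc j.succ := by
    ext k : 3; fin_cases k <;> rfl
  rw [edge, face, map_op_hom_comp_map_op_hom, h, edge]

theorem edge_comp_face_of_succ_lt {n : ℕ} (j : Fin (n + 1)) (i : Fin (n + 3))
    (hji : j.succ.castSucc < i) : (edge X j).comp (face X i) = edge X j.castSucc := by
  have h : mkOfSucc j ≫ δ i = mkOfSucc j.castSucc := by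
    ext k : 3
    fin_cases k
    · exact Fin.succAbove_of_castSucc_lt _ _ (lt_trans (by simp [Fin.lt_def]) hji)
    · exact Fin.succAbove_of_castSucc_lt _ _ hji
  rw [edge, face, map_op_hom_comp_map_op_hom, h, edge]

theorem edge_one_comp_face_two :
    (edge X (1 : Fin 2)).comp (face X (2 : Fin 4)) = (face X (1 : Fin 3)).comp (face X 0) := by
  have h : mkOfSucc 1 ≫ δ 2 = δ 1 ≫ δ (0 : Fin 4) := by
    ext k : 3; fin_cases k <;> rfl
  rw [edge, face, face, face, map_op_hom_comp_map_op_hom, map_op_hom_comp_map_op_hom, h]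

theorem segal3_eq_prodMk : segal3 X = (edge X 0).prodMk ((segal2 X).comp (face X 0)) := by
  ext x
  · rfl
  · exact (DFunLike.congr_fun (edge_comp_face_zero X 0) x).symm
  · exact (DFunLike.congr_fun (edge_comp_face_zero X 1) x).symm

theorem segal2_comp_face_two :
    (segal2 X).comp (face X 2) = (edge X 0).prodMk ((face X 1).comp (face X 0)) := by
  ext x
  · exact DFunLike.congr_fun (edge_comp_face_of_succ_lt X 0 2 (by decide)) x
  · exact DFunLike.congr_fun (edge_one_comp_face_two X) x

end SimplicialSpace

theorem id_times_face_one_homotopic_general (X : SimplexCategoryᵒᵖ ⥤ TopCat)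
    (h2 : IsHomotopyEquiv (segal2 X))
    (r : C(sp X 1 × sp X 1 × sp X 1, sp X 3)) (hr : IsHomotopyInverse (segal3 X) r) :
    ((ContinuousMap.id (sp X 1)).prodMap (face X (1 : Fin 3))).Homotopic
      ((segal2 X).comp ((face X (2 : Fin 4)).comp
        (r.comp ((ContinuousMap.id (sp X 1)).prodMap (segal2 X))))) := by
  obtain ⟨q, -, hqp⟩ := h2
  set w := r.comp ((ContinuousMap.id (sp X 1)).prodMap (segal2 X))
  have hw : (((edge X 0).comp w).prodMk ((segal2 X).comp ((face X 0).comp w))).Homotopic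
      (ContinuousMap.fst.prodMk ((segal2 X).comp .snd)) := by
    have h := hr.1.comp (.refl ((ContinuousMap.id (sp X 1)).prodMap (segal2 X)))
    rwa [segal3_eq_prodMk] at h
  obtain ⟨h_edge, h_segal_face⟩ := ContinuousMap.Homotopic.prodMk_iff.1 hw
  have h_face : ((face X 0).comp w).Homotopic .snd := .of_comp_left hqp h_segal_face
  rw [← ContinuousMap.comp_assoc, segal2_comp_face_two]
  exact (h_edge.prodMk ((ContinuousMap.Homotopic.refl (face X 1)).comp h_face)).symm

/-- If `p_2` and `p_3` are homotopy equivalences and `r` is any homotopy inverse of `p_3`,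
then `id × d_1^2` is homotopic to `p_2 ∘ d_2^3 ∘ r ∘ (id × p_2)` as maps
`X_1 × X_2 → X_1 × X_1`. -/
theorem id_times_face_one_homotopic (X : SimplexCategoryᵒᵖ ⥤ TopCat)
    (h2 : IsHomotopyEquiv (segal2 X)) (h3 : IsHomotopyEquiv (segal3 X))
    (r : C(sp X 1 × sp X 1 × sp X 1, sp X 3)) (hr : IsHomotopyInverse (segal3 X) r) :
    ((ContinuousMap.id (sp X 1)).prodMap (face X (1 : Fin 3))).Homotopic
      ((segal2 X).comp ((face X (2 : Fin 4)).comp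
        (r.comp ((ContinuousMap.id (sp X 1)).prodMap (segal2 X))))) :=
  id_times_face_one_homotopic_general X h2 r hr
end
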